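/- Let A, B, C, D > 0 and define the AFO bandwidths h₊* = θ* n^{-1/5}, h₋* = λ* h₊* where λ* = (A·D/(B·C))^{1/3} with A = φ₊, −B = φ₋ (φ₊ > 0 > φ₋), C = ω₊, D = ω₋; explicitly λ* = (−φ₊ ω₋/(φ₋ ω₊))^{1/3} and θ* = [ v ω₊ / (4 f (φ₊)(φ₊ − λ*² φ₋)) ]^{1/5} with v, f > 0. Then (h₊*, h₋*) satisfies the first-order conditions of minimizing AMSE₁ₙ(h₊,h₋) = (φ₊ h₊² − φ₋ h₋²)² + (v/(n f))(ω₊/h₊ + ω₋/h₋) over (0,∞)². -/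

import Mathlib

/-! Writing `h₋ = λ h₊`, the two first-order conditions become
`4 φ₊ (φ₊ - λ² φ₋) h₊⁵ = (v / (n f)) ω₊` and `-4 φ₋ λ³ (φ₊ - λ² φ₋) h₊⁵ = (v / (n f)) ω₋`.
Their ratio fixes `λ³ = -φ₊ ω₋ / (φ₋ ω₊)`, and the first then fixes `h₊⁵ = θ⁵ / n`. -/

open Real

theorem Real.rpow_one_div_natCast_pow {x : ℝ} (hx : 0 ≤ x) {k : ℕ} (hk : k ≠ 0) :
    (x ^ ((1 : ℝ) / k)) ^ k = x := by
  rw [one_div, rpow_inv_natCast_pow hx hk]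

theorem Real.rpow_neg_one_div_natCast_pow {x : ℝ} (hx : 0 ≤ x) {k : ℕ} (hk : k ≠ 0) :
    (x ^ (-((1 : ℝ) / k))) ^ k = x⁻¹ := by
  rw [rpow_neg hx, inv_pow, rpow_one_div_natCast_pow hx hk]

section FirstOrderConditions

variable {φp φm ωp ωm c lam hp : ℝ}

theorem foc_plus_of_pow_five (h : 4 * φp * (φp - lam ^ 2 * φm) * hp ^ 5 = c * ωp) :
    4 * φp * hp * (φp * hp ^ 2 - φm * (lam * hp) ^ 2) - c * ωp / hp ^ 2 = 0 := by
  rcases eq_or_ne hp 0 with rfl | hp0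
  · simp
  · rw [← h]
    field_simp
    ring

theorem foc_minus_of_pow_five (hφm : φm ≠ 0) (hωp : ωp ≠ 0)
    (h : 4 * φp * (φp - lam ^ 2 * φm) * hp ^ 5 = c * ωp)
    (hlam : lam ^ 3 = -(φp * ωm) / (φm * ωp)) :
    -(4 * φm * (lam * hp) * (φp * hp ^ 2 - φm * (lam * hp) ^ 2)) - c * ωm / (lam * hp) ^ 2 = 0 := by
  have hωm : c * ωm = -(4 * φm * lam ^ 3 * (φp - lam ^ 2 * φm) * hp ^ 5) := by
    rw [hlam]
    field_simp
    linear_combination (-ωm) * h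
  rcases eq_or_ne (lam * hp) 0 with h0 | h0
  · rw [h0]
    simp
  · rw [hωm]
    field_simp
    ring

end FirstOrderConditions

theorem afo_bandwidths_foc_general (φp φm ωp ωm v f : ℝ) (n : ℕ)
    (hφp : 0 < φp) (hφm : φm < 0) (hωp : 0 < ωp) (hωm : 0 < ωm)
    (hv : 0 < v) (hf : 0 < f)
    (lam θ hp hm : ℝ)
    (hlam : lam = (-(φp * ωm) / (φm * ωp)) ^ ((1 : ℝ) / 3))
    (hθ : θ = (v * ωp / (4 * f * φp * (φp - lam ^ 2 * φm))) ^ ((1 : ℝ) / 5))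
    (hhp : hp = θ * (n : ℝ) ^ (-(1 / 5 : ℝ)))
    (hhm : hm = lam * hp) :
    4 * φp * hp * (φp * hp ^ 2 - φm * hm ^ 2) - (v / ((n : ℝ) * f)) * ωp / hp ^ 2 = 0 ∧
    -(4 * φm * hm * (φp * hp ^ 2 - φm * hm ^ 2)) - (v / ((n : ℝ) * f)) * ωm / hm ^ 2 = 0 := by
  have hK : 0 < φp - lam ^ 2 * φm := by nlinarith [sq_nonneg lam]
  have hlam3 : lam ^ 3 = -(φp * ωm) / (φm * ωp) := by
    rw [hlam]
    exact_mod_cast rpow_one_div_natCast_pow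
      (div_nonneg_of_nonpos (by nlinarith) (by nlinarith)) three_ne_zero
  have hθ5 : θ ^ 5 = v * ωp / (4 * f * φp * (φp - lam ^ 2 * φm)) := by
    rw [hθ]
    exact_mod_cast rpow_one_div_natCast_pow (by positivity) (by norm_num : 5 ≠ 0)
  have hn5 : ((n : ℝ) ^ (-(1 / 5 : ℝ))) ^ 5 = (n : ℝ)⁻¹ := by
    exact_mod_cast rpow_neg_one_div_natCast_pow (Nat.cast_nonneg n) (by norm_num : 5 ≠ 0)
  have hpow : 4 * φp * (φp - lam ^ 2 * φm) * hp ^ 5 = v / (n * f) * ωp := by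
    rw [hhp, mul_pow, hθ5, hn5]
    field_simp
  rw [hhm]
  exact ⟨foc_plus_of_pow_five hpow,
    foc_minus_of_pow_five hφm.ne hωp.ne' hpow hlam3⟩

/-- The explicit AFO bandwidths in the opposite-sign case satisfy the first-order
conditions of minimizing AMSE₁ₙ(h₊,h₋) = (φ₊h₊² − φ₋h₋²)² + (v/(nf))(ω₊/h₊ + ω₋/h₋). -/
theorem afo_bandwidths_foc (φp φm ωp ωm v f : ℝ) (n : ℕ)
    (hφp : 0 < φp) (hφm : φm < 0) (hωp : 0 < ωp) (hωm : 0 < ωm)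
    (hv : 0 < v) (hf : 0 < f) (hn : 0 < n)
    (lam θ hp hm : ℝ)
    (hlam : lam = (-(φp * ωm) / (φm * ωp)) ^ ((1 : ℝ) / 3))
    (hθ : θ = (v * ωp / (4 * f * φp * (φp - lam ^ 2 * φm))) ^ ((1 : ℝ) / 5))
    (hhp : hp = θ * (n : ℝ) ^ (-(1 / 5 : ℝ)))
    (hhm : hm = lam * hp) :
    4 * φp * hp * (φp * hp ^ 2 - φm * hm ^ 2) - (v / ((n : ℝ) * f)) * ωp / hp ^ 2 = 0 ∧
    -(4 * φm * hm * (φp * hp ^ 2 - φm * hm ^ 2)) - (v / ((n : ℝ) * f)) * ωm / hm ^ 2 = 0 :=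
  afo_bandwidths_foc_general φp φm ωp ωm v f n hφp hφm hωp hωm hv hf lam θ hp hm hlam hθ hhp hhm
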